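/- arXiv:2202.03802 — 2 statements merged into one kernel-verified Lean document; each statement's English description precedes it below -/
import Mathlib

section
/- The restriction of φ to Δ_pos is an open map into X: for every open set U ⊆ Δ, the image φ(U ∩ Δ_pos) is open in X. -/
open scoped ZeroAtInfty

noncomputable section

variable {X : Type*} [TopologicalSpace X]

/-- The fibre of `φ : Δ → X` over `y`. -/
def Fiber (Δ : Set X) (φ : X → X) (y : X) : Set X := {x | x ∈ Δ ∧ φ x = y}

/-- `ρ : Δ → [0,∞)` is a potential with bound `M`: it is nonnegative on `Δ`, the sums
`Σ_{x ∈ φ⁻¹(y)} ρ(x)` are (summable and) bounded by `M`, and for every `a ∈ C₀(Δ)` the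
function `L(a)(y) = Σ_{x ∈ φ⁻¹(y)} ρ(x) a(x)` belongs to `C₀(X)`. -/
def IsPotential (Δ : Set X) (φ : X → X) (ρ : X → ℝ) (M : ℝ) : Prop :=
  (∀ x ∈ Δ, 0 ≤ ρ x) ∧
  (∀ y : X, Summable fun x : Fiber Δ φ y => ρ x.1) ∧
  (∀ y : X, (∑' x : Fiber Δ φ y, ρ x.1) ≤ M) ∧
  ∀ a : C₀(X, ℂ), (∀ x ∉ Δ, a x = 0) →
    ∃ b : C₀(X, ℂ), ∀ y : X, b y = ∑' x : Fiber Δ φ y, (ρ x.1 : ℂ) * a x.1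

/-- `Δ_pos`: the set of points of `Δ` where `ρ` is strictly positive. -/
def Dpos (Δ : Set X) (ρ : X → ℝ) : Set X := {x | x ∈ Δ ∧ 0 < ρ x}

/-- `Δ_reg`: the set of points of `Δ_pos` where `ρ` (as a function on `Δ`) is continuous. -/
def Dreg (Δ : Set X) (ρ : X → ℝ) : Set X :=
  {x | x ∈ Δ ∧ 0 < ρ x ∧ ContinuousWithinAt ρ Δ x}

/-!
Given `x₀ ∈ U ∩ Δ_pos` with `φ x₀ = y₀`, take an Urysohn function `f` with `f x₀ = 1`, values in
`[0, 1]` and compact support in `U`. Since `f ∈ C₀(Δ)`, the real function `L f` is continuous, so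
`{y | 0 < L f y}` is open. It contains `y₀` because of the term `ρ x₀ f x₀ > 0`, and any
`y` in it has a fibre point `x` with `ρ x f x > 0`, i.e. `x ∈ U ∩ Δ_pos` and `φ x = y`.
-/

open Set

namespace IsPotential

variable {Δ : Set X} {φ : X → X} {ρ : X → ℝ} {M : ℝ}

theorem summable_fiber_mul (hpot : IsPotential Δ φ ρ M) {f : X → ℝ}
    (hf : ∀ x, f x ∈ Icc 0 1) (y : X) :
    Summable fun x : Fiber Δ φ y => ρ x * f x :=
  (hpot.2.1 y).of_nonneg_of_le (fun x => mul_nonneg (hpot.1 x x.2.1) (hf x).1)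
    (fun x => mul_le_of_le_one_right (hpot.1 x x.2.1) (hf x).2)

theorem continuous_tsum_fiber_mul (hpot : IsPotential Δ φ ρ M) {f : C(X, ℝ)}
    (hfc : HasCompactSupport f) (hfΔ : ∀ x ∉ Δ, f x = 0) :
    Continuous fun y => ∑' x : Fiber Δ φ y, ρ x * f x := by
  let a : C₀(X, ℂ) :=
    ⟨(Complex.ofRealCLM : C(ℝ, ℂ)).comp f,
      (hfc.comp_left Complex.ofReal_zero).is_zero_at_infty⟩
  have ha : ∀ x, a x = f x := fun _ => rfl
  obtain ⟨b, hb⟩ := hpot.2.2.2 a fun x hx => by rw [ha, hfΔ x hx, Complex.ofReal_zero]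
  have hre : ∀ y, (b y).re = ∑' x : Fiber Δ φ y, ρ x * f x := fun y => by
    simp only [hb y, ha, ← Complex.ofReal_mul, ← Complex.ofReal_tsum, Complex.ofReal_re]
  exact (Complex.continuous_re.comp b.continuous).congr hre

end IsPotential

theorem restriction_to_Dpos_isOpenMap_general
    {X : Type*} [TopologicalSpace X] [LocallyCompactSpace X] [T2Space X]
    (Δ : Set X) (φ : X → X) (ρ : X → ℝ) (M : ℝ)
    (hpot : IsPotential Δ φ ρ M) :
    ∀ U : Set X, IsOpen U → U ⊆ Δ → IsOpen (φ '' (U ∩ Dpos Δ ρ)) := by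
  intro U hU hUΔ
  rw [isOpen_iff_forall_mem_open]
  rintro _ ⟨x₀, ⟨hx₀U, hx₀Δ, hx₀ρ⟩, rfl⟩
  obtain ⟨f, hf1, hf0, hfc, hf⟩ := exists_continuous_one_zero_of_isCompact isCompact_singleton
    hU.isClosed_compl (disjoint_singleton_left.2 (not_not_intro hx₀U))
  refine ⟨{y | 0 < ∑' x : Fiber Δ φ y, ρ x * f x}, ?_,
    isOpen_lt continuous_const
      (hpot.continuous_tsum_fiber_mul hfc (fun x hx => hf0 fun hxU => hx (hUΔ hxU))), ?_⟩
  · intro y hy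
    obtain ⟨⟨x, hxΔ, rfl⟩, hx⟩ : ∃ x : Fiber Δ φ y, 0 < ρ x * f x := by
      by_contra! h
      exact hy.not_ge (tsum_nonpos h)
    have hxU : x ∈ U := by_contra fun hxU => hx.ne' (by simp [hf0 hxU])
    exact ⟨x, ⟨hxU, hxΔ, pos_of_mul_pos_left hx (hf x).1⟩, rfl⟩
  · exact (hpot.summable_fiber_mul hf _).tsum_pos
      (fun x => mul_nonneg (hpot.1 x x.2.1) (hf x).1) ⟨x₀, hx₀Δ, rfl⟩
      (by simpa [hf1 (mem_singleton x₀)] using hx₀ρ)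

/-- The restriction of `φ` to `Δ_pos` is an open map into `X`. -/
theorem restriction_to_Dpos_isOpenMap
    {X : Type*} [TopologicalSpace X] [LocallyCompactSpace X] [T2Space X]
    (Δ : Set X) (φ : X → X) (ρ : X → ℝ) (M : ℝ)
    (hΔ : IsOpen Δ) (hφ : ContinuousOn φ Δ)
    (hcount : ∀ y : X, (Fiber Δ φ y).Countable)
    (hpot : IsPotential Δ φ ρ M) :
    ∀ U : Set X, IsOpen U → U ⊆ Δ → IsOpen (φ '' (U ∩ Dpos Δ ρ)) :=
  restriction_to_Dpos_isOpenMap_general Δ φ ρ M hpot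
end
end

section
/- For any x₀ ∈ Δ and any ε > 0 there is an open neighbourhood U₀ ⊆ Δ of x₀ such that for every open set U with x₀ ∈ U ⊆ U₀ there is an open neighbourhood V of φ(x₀) in X with | Σ_{x ∈ U ∩ φ⁻¹(y)} ρ(x) − ρ(x₀) | < ε for all y ∈ V. -/
open scoped ZeroAtInfty

noncomputable section

variable {X : Type*} [TopologicalSpace X]

/-! Let `L` be the transfer operator. Choose a finite part `s` of the fibre over `φ x₀`, containing
`x₀`, outside which the fibre has mass `< ε`, and a compactly supported bump `a` on `Δ` equal to
`1` near `x₀` and vanishing on `s \ {x₀}`; then `L a (φ x₀) < ρ x₀ + ε`. For `U` inside the set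
where `a = 1`, take a bump `b` supported in `U` with `b x₀ = 1`, so `ρ x₀ ≤ L b (φ x₀)`. The fibre
mass of `U` over `y` is squeezed between `L b y` and `L a y`, which are continuous in `y` because
`L` maps `C₀(Δ)` into `C₀(X)`. -/

open Set

section Summation

variable {ι : Type*} {f g : ι → ℝ}

theorem Summable.mul_of_mem_Icc (hf : Summable f) (hf0 : ∀ i, 0 ≤ f i)
    (hg : ∀ i, g i ∈ Icc (0 : ℝ) 1) : Summable fun i => f i * g i :=
  hf.of_nonneg_of_le (fun i => mul_nonneg (hf0 i) (hg i).1)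
    (fun i => mul_le_of_le_one_right (hf0 i) (hg i).2)

theorem tsum_mul_le_tsum_indicator {U : Set ι} (hf : Summable f) (hf0 : ∀ i, 0 ≤ f i)
    (hg : ∀ i, g i ∈ Icc (0 : ℝ) 1) (hgU : EqOn g 0 Uᶜ) :
    ∑' i, f i * g i ≤ ∑' i, U.indicator f i := by
  refine (hf.mul_of_mem_Icc hf0 hg).tsum_le_tsum (fun i => ?_) (hf.indicator U)
  by_cases hi : i ∈ U
  · simpa [hi] using mul_le_of_le_one_right (hf0 i) (hg i).2
  · simp [hi, hgU hi]

theorem tsum_indicator_le_tsum_mul {U : Set ι} (hf : Summable f) (hf0 : ∀ i, 0 ≤ f i)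
    (hg : ∀ i, g i ∈ Icc (0 : ℝ) 1) (hgU : EqOn g 1 U) :
    ∑' i, U.indicator f i ≤ ∑' i, f i * g i := by
  refine (hf.indicator U).tsum_le_tsum (fun i => ?_) (hf.mul_of_mem_Icc hf0 hg)
  by_cases hi : i ∈ U
  · simp [hi, hgU hi]
  · simpa [hi] using mul_nonneg (hf0 i) (hg i).1

theorem tsum_mul_le_add_tsum_compl (hf : Summable f) (hf0 : ∀ i, 0 ≤ f i)
    (hg : ∀ i, g i ∈ Icc (0 : ℝ) 1) {s : Finset ι} {i : ι} (hi : i ∈ s)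
    (hgs : ∀ j ∈ s, j ≠ i → g j = 0) :
    ∑' j, f j * g j ≤ f i + ∑' j : ↥(↑s : Set ι)ᶜ, f j := by
  have hfg := hf.mul_of_mem_Icc hf0 hg
  rw [← hfg.sum_add_tsum_compl (s := s),
    Finset.sum_eq_single_of_mem i hi fun j hj hji => by rw [hgs j hj hji, mul_zero]]
  refine add_le_add (mul_le_of_le_one_right (hf0 i) (hg i).2) ?_
  exact (hfg.subtype _).tsum_le_tsum (fun j => mul_le_of_le_one_right (hf0 j) (hg j).2)
    (hf.subtype _)

theorem exists_finset_mem_tsum_compl_lt (f : ι → ℝ) (i : ι) {ε : ℝ} (hε : 0 < ε) :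
    ∃ s : Finset ι, i ∈ s ∧ ∑' j : ↥(↑s : Set ι)ᶜ, f j < ε := by
  classical
  obtain ⟨s, hs⟩ := Filter.eventually_atTop.mp
    ((tendsto_tsum_compl_atTop_zero f).eventually_lt_const hε)
  exact ⟨insert i s, s.mem_insert_self i, hs _ (s.subset_insert i)⟩

end Summation

theorem tsum_inter_eq_tsum_indicator {α β : Type*} [AddCommMonoid β] [TopologicalSpace β]
    (S U : Set α) (f : α → β) :
    ∑' x : ↥(S ∩ U), f x = ∑' x : S, (Subtype.val ⁻¹' U).indicator (fun x : S => f x) x := by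
  simp_rw [show (fun x : S => f x) = f ∘ Subtype.val from rfl, Set.indicator_comp_right]
  rw [tsum_subtype, tsum_subtype, Set.indicator_indicator]

theorem exists_isOpen_bump_of_mem [RegularSpace X] [LocallyCompactSpace X] {W : Set X}
    (hW : IsOpen W) {x : X} (hx : x ∈ W) :
    ∃ U : Set X, IsOpen U ∧ x ∈ U ∧ U ⊆ W ∧ ∃ f : C(X, ℝ), HasCompactSupport f ∧
      EqOn f 1 U ∧ EqOn f 0 Wᶜ ∧ ∀ y, f y ∈ Icc (0 : ℝ) 1 := by
  obtain ⟨K, hK, hxK, hKW⟩ := exists_compact_subset hW hx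
  obtain ⟨f, hf1, hf0, hfc, hfI⟩ := exists_continuous_one_zero_of_isCompact hK hW.isClosed_compl
    (disjoint_compl_right_iff_subset.mpr hKW)
  exact ⟨interior K, isOpen_interior, hxK, interior_subset.trans hKW,
    f, hfc, hf1.mono interior_subset, hf0, hfI⟩

/-- The transfer operator `L` of the potential, on real-valued functions. -/
def transfer (Δ : Set X) (φ : X → X) (ρ g : X → ℝ) (y : X) : ℝ :=
  ∑' x : Fiber Δ φ y, ρ x * g x

section Potential

variable {Δ : Set X} {φ : X → X} {ρ : X → ℝ} {M : ℝ}

theorem IsPotential.continuous_transfer (hpot : IsPotential Δ φ ρ M) {g : C(X, ℝ)}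
    (hg : HasCompactSupport g) (hgΔ : EqOn g 0 Δᶜ) : Continuous (transfer Δ φ ρ g) := by
  let G : C₀(X, ℂ) :=
    ⟨⟨fun x => (g x : ℂ), Complex.continuous_ofReal.comp g.continuous⟩, by
      simpa [Function.comp_def] using
        (Complex.continuous_ofReal.tendsto 0).comp hg.is_zero_at_infty⟩
  obtain ⟨B, hB⟩ := hpot.2.2.2 G fun x hx => by simp [G, hgΔ hx]
  have hBre : transfer Δ φ ρ g = fun y => (B y).re := by
    ext y
    simp [hB, transfer, G, ← Complex.ofReal_mul, ← Complex.ofReal_tsum]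
  rw [hBre]
  exact Complex.continuous_re.comp B.continuous

theorem IsPotential.tsum_fiber_inter_le_transfer (hpot : IsPotential Δ φ ρ M) {U : Set X}
    {g : X → ℝ} (hg : ∀ x, g x ∈ Icc (0 : ℝ) 1) (hgU : EqOn g 1 U) (y : X) :
    ∑' x : ↥(Fiber Δ φ y ∩ U), ρ x ≤ transfer Δ φ ρ g y := by
  rw [tsum_inter_eq_tsum_indicator]
  exact tsum_indicator_le_tsum_mul (hpot.2.1 y) (fun x => hpot.1 x x.2.1) (fun x => hg x)
    fun x hx => hgU hx

theorem IsPotential.transfer_le_tsum_fiber_inter (hpot : IsPotential Δ φ ρ M) {U : Set X}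
    {g : X → ℝ} (hg : ∀ x, g x ∈ Icc (0 : ℝ) 1) (hgU : EqOn g 0 Uᶜ) (y : X) :
    transfer Δ φ ρ g y ≤ ∑' x : ↥(Fiber Δ φ y ∩ U), ρ x := by
  rw [tsum_inter_eq_tsum_indicator]
  exact tsum_mul_le_tsum_indicator (hpot.2.1 y) (fun x => hpot.1 x x.2.1) (fun x => hg x)
    fun x hx => hgU hx

theorem IsPotential.exists_bump_le_transfer [RegularSpace X] [LocallyCompactSpace X]
    (hpot : IsPotential Δ φ ρ M) {x₀ : X} (hx₀ : x₀ ∈ Δ) {U : Set X} (hU : IsOpen U)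
    (hx₀U : x₀ ∈ U) :
    ∃ b : C(X, ℝ), HasCompactSupport b ∧ EqOn b 0 Uᶜ ∧ (∀ x, b x ∈ Icc (0 : ℝ) 1) ∧
      ρ x₀ ≤ transfer Δ φ ρ b (φ x₀) := by
  obtain ⟨U₁, -, hx₀U₁, -, b, hb_cs, hb1, hb0, hbI⟩ := exists_isOpen_bump_of_mem hU hx₀U
  refine ⟨b, hb_cs, hb0, hbI, ?_⟩
  have hρ0 : ∀ x : Fiber Δ φ (φ x₀), 0 ≤ ρ x := fun x => hpot.1 x x.2.1
  simpa [transfer, hb1 hx₀U₁] using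
    ((hpot.2.1 _).mul_of_mem_Icc hρ0 fun x => hbI x).le_tsum ⟨x₀, hx₀, rfl⟩
      fun x _ => mul_nonneg (hρ0 x) (hbI x).1

theorem IsPotential.exists_bump_transfer_lt [LocallyCompactSpace X] [T2Space X]
    (hpot : IsPotential Δ φ ρ M) (hΔ : IsOpen Δ) {x₀ : X} (hx₀ : x₀ ∈ Δ) {ε : ℝ} (hε : 0 < ε) :
    ∃ U₀ : Set X, IsOpen U₀ ∧ x₀ ∈ U₀ ∧ U₀ ⊆ Δ ∧ ∃ a : C(X, ℝ), HasCompactSupport a ∧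
      EqOn a 1 U₀ ∧ EqOn a 0 Δᶜ ∧ (∀ x, a x ∈ Icc (0 : ℝ) 1) ∧
      transfer Δ φ ρ a (φ x₀) < ρ x₀ + ε := by
  classical
  let x₀' : Fiber Δ φ (φ x₀) := ⟨x₀, hx₀, rfl⟩
  obtain ⟨s, hx₀s, htail⟩ :=
    exists_finset_mem_tsum_compl_lt (fun x : Fiber Δ φ (φ x₀) => ρ x) x₀' hε
  set F : Finset X := (s.erase x₀').image Subtype.val
  have hx₀F : x₀ ∉ F := by simp [F, x₀']
  obtain ⟨U₀, hU₀, hx₀U₀, hU₀F, a, ha_cs, ha1, ha0, haI⟩ :=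
    exists_isOpen_bump_of_mem (hΔ.sdiff F.finite_toSet.isClosed) ⟨hx₀, hx₀F⟩
  refine ⟨U₀, hU₀, hx₀U₀, hU₀F.trans sdiff_subset, a, ha_cs, ha1,
    ha0.mono (compl_subset_compl.2 sdiff_subset), haI, ?_⟩
  have ha_s : ∀ x ∈ s, x ≠ x₀' → a x = 0 := fun x hx hxx₀ =>
    ha0 fun h => h.2 (Finset.mem_image_of_mem _ (Finset.mem_erase.2 ⟨hxx₀, hx⟩))
  exact (tsum_mul_le_add_tsum_compl (hpot.2.1 _) (fun x => hpot.1 x x.2.1) (fun x => haI x)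
    hx₀s ha_s).trans_lt (add_lt_add_right htail _)

end Potential

theorem continuity_of_measures_general
    {X : Type*} [TopologicalSpace X] [LocallyCompactSpace X] [T2Space X]
    (Δ : Set X) (φ : X → X) (ρ : X → ℝ) (M : ℝ)
    (hΔ : IsOpen Δ)
    (hpot : IsPotential Δ φ ρ M)
    (x₀ : X) (hx₀ : x₀ ∈ Δ) (ε : ℝ) (hε : 0 < ε) :
    ∃ U₀ : Set X, IsOpen U₀ ∧ x₀ ∈ U₀ ∧ U₀ ⊆ Δ ∧
      ∀ U : Set X, IsOpen U → x₀ ∈ U → U ⊆ U₀ →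
        ∃ V : Set X, IsOpen V ∧ φ x₀ ∈ V ∧
          ∀ y ∈ V, |(∑' x : ↥(Fiber Δ φ y ∩ U), ρ x.1) - ρ x₀| < ε := by
  obtain ⟨U₀, hU₀, hx₀U₀, hU₀Δ, a, ha_cs, ha1, ha0, haI, hLa₀⟩ :=
    hpot.exists_bump_transfer_lt hΔ hx₀ hε
  refine ⟨U₀, hU₀, hx₀U₀, hU₀Δ, fun U hU hx₀U hUU₀ => ?_⟩
  obtain ⟨b, hb_cs, hb0, hbI, hLb₀⟩ := hpot.exists_bump_le_transfer hx₀ hU hx₀U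
  have hLa := hpot.continuous_transfer ha_cs ha0
  have hLb := hpot.continuous_transfer hb_cs
    (hb0.mono (compl_subset_compl.2 (hUU₀.trans hU₀Δ)))
  refine ⟨transfer Δ φ ρ a ⁻¹' Iio (ρ x₀ + ε) ∩ transfer Δ φ ρ b ⁻¹' Ioi (ρ x₀ - ε),
    (hLa.isOpen_preimage _ isOpen_Iio).inter (hLb.isOpen_preimage _ isOpen_Ioi),
    ⟨hLa₀, by simp only [mem_preimage, mem_Ioi]; linarith⟩, fun y hy => ?_⟩
  simp only [mem_inter_iff, mem_preimage, mem_Iio, mem_Ioi] at hy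
  have hupper := hpot.tsum_fiber_inter_le_transfer haI (ha1.mono hUU₀) y
  have hlower := hpot.transfer_le_tsum_fiber_inter hbI hb0 y
  rw [abs_sub_lt_iff]
  constructor <;> linarith

/-- Continuity-of-measures lemma: for `x₀ ∈ Δ` and `ε > 0` there is a
neighbourhood `U₀` of `x₀` such that for every open `U` with `x₀ ∈ U ⊆ U₀` there is a
neighbourhood `V` of `φ(x₀)` with `|Σ_{x ∈ U ∩ φ⁻¹(y)} ρ(x) − ρ(x₀)| < ε` for all `y ∈ V`. -/
theorem continuity_of_measures
    {X : Type*} [TopologicalSpace X] [LocallyCompactSpace X] [T2Space X]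
    (Δ : Set X) (φ : X → X) (ρ : X → ℝ) (M : ℝ)
    (hΔ : IsOpen Δ) (hφ : ContinuousOn φ Δ)
    (hcount : ∀ y : X, (Fiber Δ φ y).Countable)
    (hpot : IsPotential Δ φ ρ M)
    (x₀ : X) (hx₀ : x₀ ∈ Δ) (ε : ℝ) (hε : 0 < ε) :
    ∃ U₀ : Set X, IsOpen U₀ ∧ x₀ ∈ U₀ ∧ U₀ ⊆ Δ ∧
      ∀ U : Set X, IsOpen U → x₀ ∈ U → U ⊆ U₀ →
        ∃ V : Set X, IsOpen V ∧ φ x₀ ∈ V ∧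
          ∀ y ∈ V, |(∑' x : ↥(Fiber Δ φ y ∩ U), ρ x.1) - ρ x₀| < ε :=
  continuity_of_measures_general Δ φ ρ M hΔ hpot x₀ hx₀ ε hε
end
end
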